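/- For a König–Egerváry graph G, the following are equivalent: (i) some maximum independent set is contained in Shed(G); (ii) |Ω(G)| = 2^{α(G)}; (iii) Shed(G) = V(G); (iv) every maximum independent set is contained in Shed(G); (v) G is the disjoint union of α(G) copies of K₂. -/

import Mathlib

/-!
All five conditions say that every vertex has exactly one neighbour, i.e. that some `f` satisfies
`G.Adj v w ↔ w = f v`. In such a graph the maximum independent sets are the sets holding exactly
one end of each edge, and every vertex is shedding because its partner can always be added.

For the converses, the König–Egerváry condition is needed only as `|V| ≤ 2α`, which follows from
`2μ ≤ |V|`. A shedding vertex of an independent set `S` has a private neighbour; for a maximum `S`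
these give an injection, hence a bijection, `S → Sᶜ`, and shedding once more forbids edges inside
`Sᶜ`. For any independent `S₀`, a maximum independent set `S` is determined by `S \ S₀` (a vertex
of `S₀ \ S` has a neighbour in `S`, necessarily outside `S₀`), so `|Ω(G)| ≤ 2 ^ |S₀ᶜ|`. When
`|Ω(G)| = 2 ^ α` this is an equality, so every subset of `S₀ᶜ` arises as `S \ S₀`; this makes `S₀ᶜ`
independent and gives each of its vertices a single neighbour in `S₀`.
-/

open SimpleGraph

variable {V : Type*} [Fintype V] [DecidableEq V]

/-- A set of vertices is independent: no two of its vertices are adjacent. -/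
def isIndep (G : SimpleGraph V) (S : Finset V) : Prop :=
  ∀ ⦃a⦄, a ∈ S → ∀ ⦃b⦄, b ∈ S → ¬ G.Adj a b

/-- The independence number `α(G)`. -/
noncomputable def indepNumF (G : SimpleGraph V) : ℕ :=
  sSup {n | ∃ S : Finset V, isIndep G S ∧ S.card = n}

/-- A maximum independent set: an independent set of size `α(G)`. -/
def isMaxIndep (G : SimpleGraph V) (S : Finset V) : Prop :=
  isIndep G S ∧ S.card = indepNumF G

/-- `G` has two disjoint maximum independent sets. -/
def hasTwoDisjointMaxIndep (G : SimpleGraph V) : Prop :=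
  ∃ S₁ S₂ : Finset V, isMaxIndep G S₁ ∧ isMaxIndep G S₂ ∧ Disjoint S₁ S₂

/-- A matching: a set of edges of `G`, pairwise sharing no vertex. -/
def isMatchingF (G : SimpleGraph V) (M : Finset (Sym2 V)) : Prop :=
  (∀ e ∈ M, e ∈ G.edgeSet) ∧
  (∀ e ∈ M, ∀ f ∈ M, e ≠ f → ∀ v : V, v ∈ e → v ∉ f)

/-- The matching number `μ(G)`. -/
noncomputable def matchNum (G : SimpleGraph V) : ℕ :=
  sSup {n | ∃ M : Finset (Sym2 V), isMatchingF G M ∧ M.card = n}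

/-- A shedding vertex: for every independent set `S` of `G − N[v]` there is a
neighbor `u` of `v` with `S ∪ {u}` independent. -/
def IsShedding (G : SimpleGraph V) (v : V) : Prop :=
  ∀ S : Finset V, isIndep G S → (∀ w ∈ S, w ≠ v ∧ ¬ G.Adj v w) →
    ∃ u, G.Adj v u ∧ isIndep G (insert u S)

/-- A perfect matching of `G`: a matching covering every vertex. -/
def hasPerfectMatchingF (G : SimpleGraph V) : Prop :=
  ∃ M : Finset (Sym2 V), isMatchingF G M ∧ ∀ v : V, ∃ e ∈ M, v ∈ e

/-- The disjoint union of `k` copies of `K₂`. -/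
def copiesK2 (k : ℕ) : SimpleGraph (Fin k × Fin 2) :=
  SimpleGraph.fromRel (fun p q => p.1 = q.1)

open Finset

section Independence

variable {G : SimpleGraph V} {S T : Finset V}

omit [Fintype V] [DecidableEq V] in
lemma isIndep.mono (hT : isIndep G T) (hST : S ⊆ T) : isIndep G S :=
  fun _ ha _ hb => hT (hST ha) (hST hb)

omit [Fintype V] [DecidableEq V] in
lemma isIndep_singleton (v : V) : isIndep G {v} := by
  intro a ha b hb
  rw [mem_singleton] at ha hb
  subst ha hb
  exact G.irrefl

omit [Fintype V] in
lemma isIndep_insert {u : V} :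
    isIndep G (insert u S) ↔ isIndep G S ∧ ∀ w ∈ S, ¬ G.Adj u w := by
  refine ⟨fun h => ⟨h.mono (subset_insert u S),
    fun w hw => h (mem_insert_self u S) (mem_insert_of_mem hw)⟩, ?_⟩
  rintro ⟨hS, hu⟩ a ha b hb
  rw [mem_insert] at ha hb
  rcases ha with rfl | ha <;> rcases hb with rfl | hb
  · exact G.irrefl
  · exact hu b hb
  · exact fun h => hu a ha h.symm
  · exact hS ha hb

omit [DecidableEq V] in
lemma card_le_indepNumF (hS : isIndep G S) : S.card ≤ indepNumF G :=
  le_csSup ⟨Fintype.card V, by rintro n ⟨T, -, rfl⟩; exact T.card_le_univ⟩ ⟨S, hS, rfl⟩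

omit [DecidableEq V] in
lemma exists_isMaxIndep (G : SimpleGraph V) : ∃ S, isMaxIndep G S :=
  Nat.sSup_mem (s := {n | ∃ S : Finset V, isIndep G S ∧ S.card = n})
    ⟨0, ∅, fun a ha => absurd ha (notMem_empty a), rfl⟩
    ⟨Fintype.card V, by rintro n ⟨T, -, rfl⟩; exact T.card_le_univ⟩

lemma isMaxIndep.exists_adj (hS : isMaxIndep G S) {v : V} (hv : v ∉ S) :
    ∃ w ∈ S, G.Adj v w := by
  by_contra! h
  have := card_le_indepNumF (isIndep_insert.2 ⟨hS.1, h⟩)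
  rw [card_insert_of_notMem hv, hS.2] at this
  omega

end Independence

lemma isMatchingF.two_mul_card_le {G : SimpleGraph V} {M : Finset (Sym2 V)}
    (hM : isMatchingF G M) : 2 * M.card ≤ Fintype.card V := by
  have hdisj : (M : Set (Sym2 V)).PairwiseDisjoint Sym2.toFinset := by
    intro e he e' he' hne
    rw [Function.onFun, Finset.disjoint_left]
    exact fun v hv hv' =>
      hM.2 e he e' he' hne v (Sym2.mem_toFinset.1 hv) (Sym2.mem_toFinset.1 hv')
  calc 2 * M.card = ∑ e ∈ M, e.toFinset.card := by
        rw [sum_congr rfl fun e he => Sym2.card_toFinset_of_not_isDiag e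
          (G.not_isDiag_of_mem_edgeSet (hM.1 e he)), sum_const, smul_eq_mul, mul_comm]
    _ = (M.biUnion Sym2.toFinset).card := (card_biUnion hdisj).symm
    _ ≤ Fintype.card V := card_le_univ _

lemma two_mul_matchNum_le (G : SimpleGraph V) : 2 * matchNum G ≤ Fintype.card V := by
  obtain ⟨M, hM, hMc⟩ : matchNum G ∈ {n | ∃ M : Finset (Sym2 V), isMatchingF G M ∧ M.card = n} :=
    Nat.sSup_mem ⟨0, ∅, ⟨by simp, by simp⟩, rfl⟩
      ⟨Fintype.card (Sym2 V), by rintro n ⟨N, -, rfl⟩; exact N.card_le_univ⟩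
  exact hMc ▸ hM.two_mul_card_le

section Counting

variable {G : SimpleGraph V} {S₀ : Finset V}

lemma subset_of_sdiff_eq (hS₀ : isIndep G S₀) {S S' : Finset V} (hS : isIndep G S)
    (hS' : isMaxIndep G S') (h : S \ S₀ = S' \ S₀) : S ⊆ S' := by
  intro v hv
  by_contra hv'
  by_cases hv₀ : v ∈ S₀
  · obtain ⟨w, hw, hvw⟩ := hS'.exists_adj hv'
    have hw₀ : w ∉ S₀ := fun hw₀ => hS₀ hv₀ hw₀ hvw
    exact hS hv (mem_sdiff.1 (h ▸ mem_sdiff.2 ⟨hw, hw₀⟩)).1 hvw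
  · exact hv' (mem_sdiff.1 (h ▸ mem_sdiff.2 ⟨hv, hv₀⟩)).1

lemma injOn_sdiff_maxIndep (hS₀ : isIndep G S₀) :
    Set.InjOn (· \ S₀) {S | isMaxIndep G S} := fun _ hS _ hS' h =>
  (subset_of_sdiff_eq hS₀ hS.1 hS' h).antisymm (subset_of_sdiff_eq hS₀ hS'.1 hS h.symm)

lemma image_sdiff_maxIndep_subset :
    (· \ S₀) '' {S | isMaxIndep G S} ⊆ (S₀ᶜ.powerset : Set (Finset V)) := by
  rintro _ ⟨S, -, rfl⟩
  rw [mem_coe, mem_powerset, compl_eq_univ_sdiff]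
  exact sdiff_subset_sdiff (subset_univ S) subset_rfl

lemma ncard_maxIndep_le (hS₀ : isIndep G S₀) :
    {S | isMaxIndep G S}.ncard ≤ 2 ^ S₀ᶜ.card := by
  rw [← (injOn_sdiff_maxIndep hS₀).ncard_image, ← card_powerset, ← Set.ncard_coe_finset]
  exact Set.ncard_le_ncard image_sdiff_maxIndep_subset

lemma ncard_maxIndep_eq_iff (hS₀ : isIndep G S₀) :
    {S | isMaxIndep G S}.ncard = 2 ^ S₀ᶜ.card ↔
      ∀ B ⊆ S₀ᶜ, ∃ S, isMaxIndep G S ∧ S \ S₀ = B := by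
  rw [← (injOn_sdiff_maxIndep hS₀).ncard_image, ← card_powerset, ← Set.ncard_coe_finset]
  constructor
  · intro h B hB
    have himage := Set.eq_of_subset_of_ncard_le image_sdiff_maxIndep_subset h.ge
    have hB' : B ∈ (S₀ᶜ.powerset : Set (Finset V)) := mem_powerset.2 hB
    rw [← himage] at hB'
    obtain ⟨S, hS, rfl⟩ := hB'
    exact ⟨S, hS, rfl⟩
  · intro h
    congr 1
    refine image_sdiff_maxIndep_subset.antisymm fun B hB => ?_
    obtain ⟨S, hS, rfl⟩ := h B (mem_powerset.1 hB)
    exact ⟨S, hS, rfl⟩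

end Counting

section PrivateNeighbours

variable {G : SimpleGraph V} {S : Finset V} {u : V → V}

omit [Fintype V] in
lemma IsShedding.exists_private_adj {v : V} (hshed : IsShedding G v) (hS : isIndep G S)
    (hv : v ∈ S) : ∃ u, G.Adj v u ∧ ∀ x ∈ S, G.Adj u x → x = v := by
  obtain ⟨u, hvu, hind⟩ := hshed (S.erase v) (hS.mono (erase_subset v S))
    fun w hw => ⟨ne_of_mem_erase hw, hS hv (mem_of_mem_erase hw)⟩
  refine ⟨u, hvu, fun x hx hux => ?_⟩
  by_contra hxv
  exact (isIndep_insert.1 hind).2 x (mem_erase.2 ⟨hxv, hx⟩) hux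

lemma exists_eq_of_private (hS : isIndep G S) (hu : ∀ v ∈ S, G.Adj v (u v))
    (hpriv : ∀ v ∈ S, ∀ x ∈ S, G.Adj (u v) x → x = v) (hcard : Sᶜ.card ≤ S.card)
    {w : V} (hw : w ∉ S) : ∃ v ∈ S, u v = w := by
  obtain ⟨v, hv, rfl⟩ := surj_on_of_inj_on_of_card_le (fun v _ => u v)
    (fun v hv => mem_compl.2 fun h => hS hv h (hu v hv))
    (fun a b ha hb hab => hpriv b hb a ha (hab ▸ (hu a ha).symm)) hcard w (mem_compl.2 hw)
  exact ⟨v, hv, rfl⟩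

end PrivateNeighbours

def IsPartnerMap (G : SimpleGraph V) (f : V → V) : Prop :=
  ∀ v w, G.Adj v w ↔ w = f v

omit [Fintype V] [DecidableEq V] in
lemma exists_isPartnerMap_of_existsUnique {G : SimpleGraph V} (h : ∀ v, ∃! w, G.Adj v w) :
    ∃ f, IsPartnerMap G f := by
  choose f hf using h
  exact ⟨f, fun v w => ⟨(hf v).2 w, fun h => h ▸ (hf v).1⟩⟩

lemma exists_isPartnerMap_of_private {G : SimpleGraph V} {S : Finset V} {u : V → V}
    (hS : isIndep G S) (hSc : isIndep G Sᶜ) (hu : ∀ v ∈ S, G.Adj v (u v))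
    (hpriv : ∀ v ∈ S, ∀ x ∈ S, G.Adj (u v) x → x = v)
    (hcover : ∀ w ∉ S, ∃ v ∈ S, u v = w) : ∃ f, IsPartnerMap G f := by
  refine exists_isPartnerMap_of_existsUnique fun v => ?_
  by_cases hv : v ∈ S
  · refine ⟨u v, hu v hv, fun w hvw => ?_⟩
    obtain ⟨x, hx, rfl⟩ := hcover w fun hw => hS hv hw hvw
    rw [hpriv x hx v hv hvw.symm]
  · obtain ⟨x, hx, rfl⟩ := hcover v hv
    refine ⟨x, (hu x hx).symm, fun w hw => ?_⟩
    by_cases hwS : w ∈ S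
    · exact hpriv x hx w hwS hw
    · exact absurd hw (hSc (mem_compl.2 hv) (mem_compl.2 hwS))

theorem exists_isPartnerMap_of_shedding {G : SimpleGraph V} {S : Finset V}
    (hn : Fintype.card V ≤ 2 * indepNumF G) (hS : isMaxIndep G S)
    (hshed : ∀ v ∈ S, IsShedding G v) : ∃ f, IsPartnerMap G f := by
  choose! u hu hpriv using fun v hv => (hshed v hv).exists_private_adj hS.1 hv
  have hcover : ∀ w ∉ S, ∃ v ∈ S, u v = w := fun _ =>
    exists_eq_of_private hS.1 hu hpriv (by rw [card_compl, hS.2]; omega)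
  refine exists_isPartnerMap_of_private hS.1 ?_ hu hpriv hcover
  intro w hw w' hw' hadj
  obtain ⟨x, hx, rfl⟩ := hcover w (mem_compl.1 hw)
  obtain ⟨y, hy, rfl⟩ := hcover w' (mem_compl.1 hw')
  obtain rfl | hxy := eq_or_ne x y
  · exact G.irrefl hadj
  -- shedding at `x`, applied to `{u y}`, produces a neighbour of `x` that must be `u x`
  obtain ⟨z, hxz, hind⟩ := hshed x hx {u y} (isIndep_singleton _) fun _ h => by
    rw [mem_singleton] at h
    subst h
    exact ⟨fun h => mem_compl.1 hw' (h ▸ hx), fun h => hxy (hpriv y hy x hx h.symm)⟩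
  obtain ⟨t, ht, rfl⟩ := hcover z fun hz => hS.1 hx hz hxz
  obtain rfl := hpriv t ht x hx hxz.symm
  exact (isIndep_insert.1 hind).2 _ (mem_singleton_self _) hadj

lemma eq_of_adj_of_forall_exists_sdiff_eq {G : SimpleGraph V} {S₀ : Finset V}
    (hS₀ : isMaxIndep G S₀) (hext : ∀ B ⊆ S₀ᶜ, ∃ S, isMaxIndep G S ∧ S \ S₀ = B)
    {w x y : V} (hw : w ∉ S₀) (hx : x ∈ S₀) (hy : y ∈ S₀) (hwx : G.Adj w x)
    (hwy : G.Adj w y) : x = y := by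
  by_contra hxy
  obtain ⟨S, hS, hSB⟩ := hext {w} (singleton_subset_iff.2 (mem_compl.2 hw))
  have hwS : w ∈ S := (mem_sdiff.1 (hSB ▸ mem_singleton_self w : w ∈ S \ S₀)).1
  have hsub : S.erase w ⊆ (S₀.erase x).erase y := by
    intro v hv
    obtain ⟨hvw, hvS⟩ := mem_erase.1 hv
    have hv₀ : v ∈ S₀ := by
      by_contra hv₀
      exact hvw (mem_singleton.1 (hSB ▸ mem_sdiff.2 ⟨hvS, hv₀⟩))
    refine mem_erase.2 ⟨?_, mem_erase.2 ⟨?_, hv₀⟩⟩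
    · rintro rfl; exact hS.1 hwS hvS hwy
    · rintro rfl; exact hS.1 hwS hvS hwx
  have h₁ := card_erase_add_one hwS
  have h₂ := card_erase_add_one (mem_erase.2 ⟨Ne.symm hxy, hy⟩)
  have h₃ := card_erase_add_one hx
  have h₄ := card_le_card hsub
  rw [hS.2] at h₁
  rw [hS₀.2] at h₃
  omega

theorem exists_isPartnerMap_of_ncard_maxIndep {G : SimpleGraph V}
    (hn : Fintype.card V ≤ 2 * indepNumF G)
    (h : {S | isMaxIndep G S}.ncard = 2 ^ indepNumF G) : ∃ f, IsPartnerMap G f := by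
  obtain ⟨S₀, hS₀⟩ := exists_isMaxIndep G
  have hcard : S₀ᶜ.card = S₀.card := by
    have hle := ncard_maxIndep_le hS₀.1
    rw [h, Nat.pow_le_pow_iff_right one_lt_two] at hle
    rw [card_compl, hS₀.2] at hle ⊢
    omega
  have hext := (ncard_maxIndep_eq_iff hS₀.1).1 (by rw [hcard, hS₀.2, h])
  obtain ⟨T, hT, hTS₀⟩ := hext S₀ᶜ subset_rfl
  have hT_eq : T = S₀ᶜ := (eq_of_subset_of_card_le (hTS₀ ▸ sdiff_subset)
    (by rw [hT.2, hcard, hS₀.2])).symm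
  subst hT_eq
  choose! u hu hadj using fun v (hv : v ∈ S₀) => hT.exists_adj (notMem_compl.2 hv)
  have hpriv : ∀ v ∈ S₀, ∀ x ∈ S₀, G.Adj (u v) x → x = v := fun v hv x hx hx' =>
    eq_of_adj_of_forall_exists_sdiff_eq hS₀ hext (mem_compl.1 (hu v hv)) hx hv hx'
      (hadj v hv).symm
  exact exists_isPartnerMap_of_private hS₀.1 hT.1 hadj hpriv
    fun w => exists_eq_of_private hS₀.1 hadj hpriv hcard.le

def endpointIn (f : V → V) (S : Finset V) (v : V) : V := if v ∈ S then v else f v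

namespace IsPartnerMap

variable {G : SimpleGraph V} {f : V → V} {S T : Finset V}

omit [Fintype V] [DecidableEq V] in
lemma adj (hf : IsPartnerMap G f) (v : V) : G.Adj v (f v) := (hf v _).2 rfl

omit [Fintype V] [DecidableEq V] in
lemma apply_apply (hf : IsPartnerMap G f) (v : V) : f (f v) = v :=
  ((hf _ _).1 (hf.adj v).symm).symm

omit [Fintype V] in
lemma isShedding (hf : IsPartnerMap G f) (v : V) : IsShedding G v := by
  intro S hS hfar
  refine ⟨f v, hf.adj v, isIndep_insert.2 ⟨hS, fun w hw hvw => (hfar w hw).1 ?_⟩⟩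
  rw [(hf _ _).1 hvw, hf.apply_apply]

lemma mem_iff_notMem (hf : IsPartnerMap G f) (hS : isMaxIndep G S) (v : V) :
    v ∈ S ↔ f v ∉ S := by
  refine ⟨fun hv hfv => hS.1 hv hfv (hf.adj v), fun hfv => ?_⟩
  by_contra hv
  obtain ⟨w, hw, hvw⟩ := hS.exists_adj hv
  exact hfv ((hf v w).1 hvw ▸ hw)

lemma two_mul_card (hf : IsPartnerMap G f) (hT : ∀ v, v ∈ T ↔ f v ∉ T) :
    2 * T.card = Fintype.card V := by
  have h : Tᶜ.card = T.card := card_nbij' f f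
    (fun v hv => by_contra fun h => mem_compl.1 hv ((hT v).2 h))
    (fun v hv => mem_compl.2 ((hT v).1 hv))
    (fun v _ => hf.apply_apply v) (fun v _ => hf.apply_apply v)
  rw [card_compl] at h
  have := T.card_le_univ
  omega

lemma two_mul_indepNumF (hf : IsPartnerMap G f) : 2 * indepNumF G = Fintype.card V := by
  obtain ⟨S, hS⟩ := exists_isMaxIndep G
  rw [← hS.2]
  exact hf.two_mul_card (hf.mem_iff_notMem hS)

lemma isMaxIndep_iff (hf : IsPartnerMap G f) : isMaxIndep G T ↔ ∀ v, v ∈ T ↔ f v ∉ T := by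
  refine ⟨hf.mem_iff_notMem, fun hT =>
    ⟨fun a ha b hb hab => (hT a).1 ha ((hf a b).1 hab ▸ hb), ?_⟩⟩
  have := hf.two_mul_card hT
  have := hf.two_mul_indepNumF
  omega

lemma ncard_maxIndep (hf : IsPartnerMap G f) :
    {S | isMaxIndep G S}.ncard = 2 ^ indepNumF G := by
  obtain ⟨S₀, hS₀⟩ := exists_isMaxIndep G
  have h₀ := hf.mem_iff_notMem hS₀
  have hcard := hf.two_mul_card h₀
  rw [show indepNumF G = S₀ᶜ.card by rw [card_compl, ← hS₀.2]; omega]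
  refine (ncard_maxIndep_eq_iff hS₀.1).2 fun B hB => ?_
  refine ⟨univ.filter fun v => if v ∈ S₀ then f v ∉ B else v ∈ B,
    hf.isMaxIndep_iff.2 fun v => ?_, ?_⟩
  · by_cases hv : v ∈ S₀
    · simp [hv, (h₀ v).1 hv]
    · simp [hv, not_not.1 (mt (h₀ v).2 hv), hf.apply_apply]
  · ext v
    by_cases hv : v ∈ S₀
    · simpa [hv] using fun hvB => mem_compl.1 (hB hvB) hv
    · simp [hv]

omit [Fintype V] in
lemma endpointIn_mem (hS : ∀ v, v ∈ S ↔ f v ∉ S) (v : V) : endpointIn f S v ∈ S := by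
  unfold endpointIn
  split_ifs with hv
  exacts [hv, not_not.1 (mt (hS v).2 hv)]

omit [Fintype V] in
lemma endpointIn_eq_endpointIn_iff (hf : IsPartnerMap G f) (hS : ∀ v, v ∈ S ↔ f v ∉ S)
    {v w : V} : endpointIn f S v = endpointIn f S w ↔ w = v ∨ w = f v := by
  have := hf.apply_apply
  unfold endpointIn
  by_cases hv : v ∈ S <;> by_cases hw : w ∈ S <;> grind

lemma nonempty_iso (hf : IsPartnerMap G f) : Nonempty (G ≃g copiesK2 (indepNumF G)) := by
  obtain ⟨S, hS⟩ := exists_isMaxIndep G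
  have hS' := hf.mem_iff_notMem hS
  let σ : S ≃ Fin (indepNumF G) := Fintype.equivFinOfCardEq ((Fintype.card_coe S).trans hS.2)
  let φ : V → Fin (indepNumF G) × Fin 2 := fun v =>
    (σ ⟨_, endpointIn_mem hS' v⟩, if v ∈ S then 0 else 1)
  have hfst : ∀ v w, (φ v).1 = (φ w).1 ↔ w = v ∨ w = f v := fun v w => by
    simp only [φ, σ.injective.eq_iff, Subtype.mk.injEq]
    exact hf.endpointIn_eq_endpointIn_iff hS'
  have hφ : ∀ v w, φ v = φ w ↔ w = v := fun v w => by
    refine ⟨fun h => ?_, fun h => h ▸ rfl⟩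
    obtain rfl | rfl := (hfst v w).1 (congrArg Prod.fst h)
    · rfl
    · have h2 := congrArg Prod.snd h
      by_cases hv : v ∈ S
      · simp [φ, hv, (hS' v).1 hv] at h2
      · simp [φ, hv, not_not.1 (mt (hS' v).2 hv)] at h2
  have hbij : Function.Bijective φ := (Fintype.bijective_iff_injective_and_card φ).2
    ⟨fun v w h => ((hφ v w).1 h).symm, by simp [← hf.two_mul_indepNumF, mul_comm]⟩
  refine ⟨⟨Equiv.ofBijective φ hbij, fun {v w} => ?_⟩⟩
  simp only [Equiv.ofBijective_apply, copiesK2, fromRel_adj, ne_eq, hφ, eq_comm (a := (φ w).1),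
    or_self, hfst, hf v w]
  exact ⟨fun h => h.2.resolve_left h.1, fun h => ⟨h ▸ (hf.adj v).ne', Or.inr h⟩⟩

end IsPartnerMap

lemma isPartnerMap_copiesK2 (k : ℕ) : IsPartnerMap (copiesK2 k) fun p => (p.1, p.2.rev) := by
  rintro ⟨a, i⟩ ⟨b, j⟩
  simp only [copiesK2, fromRel_adj, ne_eq, Prod.mk.injEq]
  fin_cases i <;> fin_cases j <;> simp [eq_comm]

omit [Fintype V] [DecidableEq V] in
lemma IsPartnerMap.of_iso {W : Type*} [Fintype W] [DecidableEq W] {G : SimpleGraph V}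
    {H : SimpleGraph W} {g : W → W} (hg : IsPartnerMap H g) (ψ : G ≃g H) :
    IsPartnerMap G fun v => ψ.symm (g (ψ v)) := fun v w => by
  rw [← ψ.map_adj_iff, hg, RelIso.eq_symm_apply]

/-- For a König–Egerváry graph the five conditions are equivalent. -/
theorem stmt15 (G : SimpleGraph V)
    (hKE : indepNumF G + matchNum G = Fintype.card V) :
    List.TFAE
      [∃ S : Finset V, isMaxIndep G S ∧ ∀ v ∈ S, IsShedding G v,
       {S : Finset V | isMaxIndep G S}.ncard = 2 ^ indepNumF G,
       ∀ v : V, IsShedding G v,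
       ∀ S : Finset V, isMaxIndep G S → ∀ v ∈ S, IsShedding G v,
       Nonempty (G ≃g copiesK2 (indepNumF G))] := by
  have hn : Fintype.card V ≤ 2 * indepNumF G := by
    have := two_mul_matchNum_le G
    omega
  tfae_have 1 → 5 := fun ⟨_, hS, hshed⟩ =>
    (exists_isPartnerMap_of_shedding hn hS hshed).elim fun _ hf => hf.nonempty_iso
  tfae_have 2 → 5 := fun h =>
    (exists_isPartnerMap_of_ncard_maxIndep hn h).elim fun _ hf => hf.nonempty_iso
  tfae_have 5 → 2 := fun ⟨ψ⟩ => ((isPartnerMap_copiesK2 _).of_iso ψ).ncard_maxIndep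
  tfae_have 5 → 3 := fun ⟨ψ⟩ => ((isPartnerMap_copiesK2 _).of_iso ψ).isShedding
  tfae_have 3 → 4 := fun h _ _ v _ => h v
  tfae_have 4 → 1 := fun h =>
    (exists_isMaxIndep G).elim fun S hS => ⟨S, hS, h S hS⟩
  tfae_finish
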